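/- arXiv:2410.09231 — 3 statements merged into one kernel-verified Lean document; each statement's English description precedes it below -/
import Mathlib

section
/- With Ğ(y,x) as defined, for any fixed y ∈ (0,1/2), the limit of ∂Ğ/∂x as x → 1⁻ equals log(2)·((1-y)·(1 + (1/2)·log(y/(1-y))) - h₂(y)/2), and this quantity is strictly negative for all y ∈ (0,1/2). -/
/-- Two-point (Bernoulli) Kullback–Leibler divergence (natural log). -/
noncomputable def klBer (a b : ℝ) : ℝ :=
  a * Real.log (a / b) + (1 - a) * Real.log ((1 - a) / (1 - b))

/-- Binary entropy (base 2). -/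
noncomputable def binEnt (x : ℝ) : ℝ := -x * Real.logb 2 x - (1 - x) * Real.logb 2 (1 - x)

/-- `y_{(x)} = y + (1-y)(2^{1-x} - 1)`. -/
noncomputable def yOf (y x : ℝ) : ℝ := y + (1 - y) * ((2 : ℝ) ^ (1 - x) - 1)

/-- The function `G(y, y', x)`. -/
noncomputable def Gfun (y y' x : ℝ) : ℝ :=
  x / 2 * klBer y (1 / 2) + y' * klBer (y / y') ((2 : ℝ) ^ (-(1 - x)))
    - klBer y (1 / 2) + 1 / 2 * klBer y' ((2 : ℝ) ^ (-x))

/-- `Ğ(y,x) = G(y, y_{(x)}, x)`. -/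
noncomputable def Gbr (y x : ℝ) : ℝ := Gfun y (yOf y x) x

/-!
For `0 < x < 1` every logarithm in `Ğ(y, x)` splits, and since
`(y_{(x)} - y) / (1 - 2^{x-1}) = (1 - y) 2^{1-x}` the apparent `0/0` at `x = 1` in the second
KL term disappears: on `(0, 1)`, `Ğ(y, ·)` agrees with a closed form that is continuously
differentiable across `x = 1`, so the limit is the derivative of that closed form at `1`.

With `c = log 2` this value is
`c (1 - y) + (y + c (1 - y))/2 · log y + (1 - y)(1 - c)/2 · log (1 - y)`.
Bounding `log (2y)` and `log (2(1 - y))` by the cubic Taylor polynomial of `log` at `1`, which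
dominates `log` on all of `(0, ∞)`, leaves
`(1/2 - y)² (1 - 2c) + 4/3 (1/2 - y)³ ((1 - 2y)(1 - c) - c)`, negative because `c > 1/2`.
-/

open Real Set

theorem log_le_cubic_taylor {u : ℝ} (hu : 0 < u) :
    log u ≤ (u - 1) - (u - 1) ^ 2 / 2 + (u - 1) ^ 3 / 3 := by
  set g : ℝ → ℝ := fun v ↦ (v - 1) - (v - 1) ^ 2 / 2 + (v - 1) ^ 3 / 3 - log v
  have hg : ∀ v : ℝ, 0 < v → HasDerivAt g ((v - 1) ^ 3 / v) v := fun v hv ↦ by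
    have h := (hasDerivAt_id' v).sub_const 1
    refine (((h.sub ((h.pow 2).div_const 2)).add ((h.pow 3).div_const 3)).sub
      (hasDerivAt_log hv.ne')).congr_deriv ?_
    field_simp
    ring
  have hcont : ContinuousOn g (Ioi 0) := fun v hv ↦ (hg v hv).continuousAt.continuousWithinAt
  suffices 0 ≤ g u by simp only [g] at this; linarith
  have hg1 : g 1 = 0 := by simp [g]
  rcases le_total u 1 with hu1 | hu1
  · have hanti : AntitoneOn g (Ioc 0 1) :=
      antitoneOn_of_hasDerivWithinAt_nonpos (convex_Ioc 0 1) (hcont.mono Ioc_subset_Ioi_self)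
        (fun v hv ↦ by
          rw [interior_Ioc] at hv ⊢
          exact (hg v hv.1).hasDerivWithinAt)
        (fun v hv ↦ by
          rw [interior_Ioc] at hv
          have : v - 1 ≤ 0 := by linarith [hv.2]
          exact div_nonpos_of_nonpos_of_nonneg (Odd.pow_nonpos (by decide) this) hv.1.le)
    simpa [hg1] using hanti ⟨hu, hu1⟩ ⟨one_pos, le_rfl⟩ hu1
  · have hmono : MonotoneOn g (Ici 1) :=
      monotoneOn_of_hasDerivWithinAt_nonneg (convex_Ici 1)
        (hcont.mono fun v (hv : 1 ≤ v) ↦ mem_Ioi.2 (one_pos.trans_le hv))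
        (fun v hv ↦ by
          rw [interior_Ici] at hv ⊢
          exact (hg v (one_pos.trans hv)).hasDerivWithinAt)
        (fun v hv ↦ by
          rw [interior_Ici] at hv
          have : 0 < v - 1 := sub_pos.2 hv
          have : 0 < v := one_pos.trans hv
          positivity)
    simpa [hg1] using hmono self_mem_Ici hu1 hu1

theorem log_two_mul_sub_half_binEnt_neg {y : ℝ} (hy0 : 0 < y) (hy : y < 1 / 2) :
    log 2 * ((1 - y) * (1 + 1 / 2 * log (y / (1 - y))) - binEnt y / 2) < 0 := by
  set c := log 2
  have hc : 1 / 2 < c := by linarith [log_two_gt_d9]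
  have hc1 : c < 1 := by linarith [log_two_lt_d9]
  have hy1 : 0 < 1 - y := by linarith
  have hlog_y : log y ≤ -c + (2 * y - 1) - (2 * y - 1) ^ 2 / 2 + (2 * y - 1) ^ 3 / 3 := by
    have h := log_le_cubic_taylor (u := 2 * y) (by positivity)
    rw [log_mul two_ne_zero hy0.ne'] at h
    linarith
  have hlog_1y : log (1 - y) ≤ -c + (1 - 2 * y) - (1 - 2 * y) ^ 2 / 2 + (1 - 2 * y) ^ 3 / 3 := by
    have h := log_le_cubic_taylor (u := 2 * (1 - y)) (by positivity)
    rw [log_mul two_ne_zero hy1.ne'] at h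
    linarith
  have hA : 0 ≤ (y + c * (1 - y)) / 2 := by nlinarith
  have hB : 0 ≤ (1 - y) * (1 - c) / 2 := by nlinarith
  have hd : 0 < 1 / 2 - y := by linarith
  calc _ = c * (1 - y) + (y + c * (1 - y)) / 2 * log y + (1 - y) * (1 - c) / 2 * log (1 - y) := by
        rw [log_div hy0.ne' hy1.ne', binEnt, logb, logb]
        field_simp
        ring
    _ ≤ (1 / 2 - y) ^ 2 * (1 - 2 * c)
          + 4 / 3 * (1 / 2 - y) ^ 3 * ((1 - 2 * y) * (1 - c) - c) := by
      linarith [mul_le_mul_of_nonneg_left hlog_y hA, mul_le_mul_of_nonneg_left hlog_1y hB]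
    _ < 0 := by
      have h1 : (1 / 2 - y) ^ 2 * (1 - 2 * c) < 0 :=
        mul_neg_of_pos_of_neg (by positivity) (by linarith)
      have h2 : 4 / 3 * (1 / 2 - y) ^ 3 * ((1 - 2 * y) * (1 - c) - c) ≤ 0 :=
        mul_nonpos_of_nonneg_of_nonpos (by positivity) (by nlinarith)
      linarith

theorem klBer_one_half {a : ℝ} (ha0 : a ≠ 0) (ha1 : 1 - a ≠ 0) :
    klBer a (1 / 2) = log 2 * (1 - binEnt a) := by
  rw [klBer, show a / (1 / 2) = a * 2 by ring, show (1 - a) / (1 - 1 / 2) = (1 - a) * 2 by ring,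
    log_mul ha0 two_ne_zero, log_mul ha1 two_ne_zero, binEnt, logb, logb]
  field_simp
  ring

theorem mul_klBer_div {a b q : ℝ} (ha : a ≠ 0) (hb : b ≠ 0) (hab : a ≠ b) (hq0 : q ≠ 0)
    (hq1 : q ≠ 1) :
    b * klBer (a / b) q = a * log (a / q) + (b - a) * log ((b - a) / (1 - q)) - b * log b := by
  have h1 : a / b / q = a / q / b := div_right_comm a b q
  have h2 : (1 - a / b) / (1 - q) = (b - a) / (1 - q) / b := by field_simp
  rw [klBer, h1, h2, log_div (div_ne_zero ha hq0) hb,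
    log_div (div_ne_zero (sub_ne_zero.2 hab.symm) (sub_ne_zero.2 hq1.symm)) hb]
  field_simp
  ring

theorem yOf_mem_Ioo {y x : ℝ} (hy : y < 1) (hx : x ∈ Ioo 0 1) : yOf y x ∈ Ioo y 1 := by
  have ht1 : 1 < (2 : ℝ) ^ (1 - x) := one_lt_rpow one_lt_two (by linarith [hx.2])
  have ht2 : (2 : ℝ) ^ (1 - x) < 2 := by
    simpa using rpow_lt_rpow_of_exponent_lt one_lt_two (show 1 - x < 1 by linarith [hx.1])
  constructor <;> rw [yOf] <;> nlinarith

theorem yOf_one (y : ℝ) : yOf y 1 = y := by simp [yOf]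

theorem hasDerivAt_yOf (y x : ℝ) :
    HasDerivAt (yOf y) (-((1 - y) * log 2 * (2 : ℝ) ^ (1 - x))) x := by
  have ht := ((hasDerivAt_id' x).const_sub 1).const_rpow two_pos
  refine (((ht.sub_const 1).const_mul (1 - y)).const_add y).congr_deriv ?_
  ring

noncomputable def Gclosed (y x : ℝ) : ℝ :=
  (x / 2 - 1) * klBer y (1 / 2) + y * log y + (yOf y x - y) * log (1 - y)
    + negMulLog (yOf y x) / 2 + log 2 * (1 - x / 2) * yOf y x
    - negMulLog (1 - yOf y x) / 2 - (1 - yOf y x) * log (1 - (2 : ℝ) ^ (-x)) / 2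

theorem Gbr_eq_Gclosed {y x : ℝ} (hy : y ∈ Ioo 0 1) (hx : x ∈ Ioo 0 1) :
    Gbr y x = Gclosed y x := by
  obtain ⟨hyY, hY1⟩ := yOf_mem_Ioo hy.2 hx
  set Y := yOf y x with hYdef
  have hY0 : 0 < Y := hy.1.trans hyY
  set t : ℝ := (2 : ℝ) ^ (1 - x) with htdef
  have ht1 : 1 < t := one_lt_rpow one_lt_two (by linarith [hx.2])
  have hq : (2 : ℝ) ^ (-(1 - x)) = t⁻¹ := rpow_neg zero_le_two _
  have hs1 : (2 : ℝ) ^ (-x) < 1 := rpow_lt_one_of_one_lt_of_neg one_lt_two (by linarith [hx.1])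
  have hlog_q : log (y / (2 : ℝ) ^ (-(1 - x))) = log y + (1 - x) * log 2 := by
    rw [log_div hy.1.ne' (by positivity), log_rpow two_pos]
    ring
  have hlog_r : log ((Y - y) / (1 - (2 : ℝ) ^ (-(1 - x)))) = log (1 - y) + (1 - x) * log 2 := by
    have hY : Y - y = (1 - y) * (t - 1) := by rw [hYdef, yOf]; ring
    have ht : t ≠ 0 := by positivity
    have ht1' : t - 1 ≠ 0 := by linarith
    rw [hq, hY, show (1 - y) * (t - 1) / (1 - t⁻¹) = (1 - y) * t by field_simp,
      log_mul (by linarith [hy.2]) ht, htdef, log_rpow two_pos]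
  have hterm2 := mul_klBer_div hy.1.ne' hY0.ne' hyY.ne (by positivity)
    (show (2 : ℝ) ^ (-(1 - x)) ≠ 1 by rw [hq]; exact inv_ne_one.2 ht1.ne')
  have hterm3 : klBer Y ((2 : ℝ) ^ (-x)) =
      Y * (log Y + x * log 2) + (1 - Y) * (log (1 - Y) - log (1 - (2 : ℝ) ^ (-x))) := by
    rw [klBer, log_div hY0.ne' (by positivity), log_rpow two_pos,
      log_div (by linarith) (by linarith)]
    ring
  rw [Gbr, Gfun, ← hYdef, hterm2, hlog_q, hlog_r, hterm3, Gclosed, ← hYdef, negMulLog,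
    negMulLog]
  ring

noncomputable def GclosedDeriv (y x : ℝ) : ℝ :=
  (klBer y (1 / 2) - log 2 * yOf y x
      - log 2 * (1 - yOf y x) * (2 : ℝ) ^ (-x) / (1 - (2 : ℝ) ^ (-x))) / 2
    - (1 - y) * log 2 * (2 : ℝ) ^ (1 - x) * (log (1 - y) - 1 + log 2 * (1 - x / 2)
      + (log (1 - (2 : ℝ) ^ (-x)) - log (yOf y x) - log (1 - yOf y x)) / 2)

theorem hasDerivAt_Gclosed {y x : ℝ} (hY0 : yOf y x ≠ 0) (hY1 : 1 - yOf y x ≠ 0)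
    (hs : 1 - (2 : ℝ) ^ (-x) ≠ 0) :
    HasDerivAt (Gclosed y) (GclosedDeriv y x) x := by
  have hx := hasDerivAt_id' x
  have hY := hasDerivAt_yOf y x
  have h2s := (hasDerivAt_neg' x).const_rpow two_pos
  have hlin := ((hx.div_const 2).sub_const 1).mul_const (klBer y (1 / 2))
  have hent := (hasDerivAt_negMulLog hY0).comp x hY
  have hent' := (hasDerivAt_negMulLog hY1).comp x (hY.const_sub 1)
  have hmid := (((hx.div_const 2).const_sub 1).const_mul (log 2)).mul hY
  have hcross := (hY.const_sub 1).mul ((h2s.const_sub 1).log hs)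
  refine ((((((hlin.add_const (y * log y)).add ((hY.sub_const y).mul_const (log (1 - y)))).add
    (hent.div_const 2)).add hmid).sub (hent'.div_const 2)).sub
    (hcross.div_const 2)).congr_deriv ?_
  rw [GclosedDeriv]
  ring

theorem continuousAt_GclosedDeriv_one {y : ℝ} (hy0 : y ≠ 0) (hy1 : 1 - y ≠ 0) :
    ContinuousAt (GclosedDeriv y) 1 := by
  have hs : 1 - (2 : ℝ) ^ (-(1 : ℝ)) ≠ 0 := by norm_num [rpow_neg_one]
  have hY : ContinuousAt (yOf y) 1 := (hasDerivAt_yOf y 1).continuousAt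
  unfold GclosedDeriv
  fun_prop (disch := simp_all [yOf_one])

theorem GclosedDeriv_one {y : ℝ} (hy0 : y ≠ 0) (hy1 : 1 - y ≠ 0) :
    GclosedDeriv y 1 = log 2 * ((1 - y) * (1 + 1 / 2 * log (y / (1 - y))) - binEnt y / 2) := by
  have hs : (2 : ℝ) ^ (-(1 : ℝ)) = 2⁻¹ := rpow_neg_one 2
  have hlog : log (1 - 2⁻¹ : ℝ) = -log 2 := by
    rw [show (1 : ℝ) - 2⁻¹ = 2⁻¹ by norm_num, log_inv]
  rw [GclosedDeriv, yOf_one, hs, hlog, sub_self, rpow_zero, klBer_one_half hy0 hy1,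
    log_div hy0 hy1, binEnt, logb, logb]
  field_simp
  ring

theorem deriv_Gbr {y x : ℝ} (hy : y ∈ Ioo 0 1) (hx : x ∈ Ioo 0 1) :
    deriv (Gbr y) x = GclosedDeriv y x := by
  obtain ⟨hyY, hY1⟩ := yOf_mem_Ioo hy.2 hx
  have hs : (2 : ℝ) ^ (-x) < 1 := rpow_lt_one_of_one_lt_of_neg one_lt_two (by linarith [hx.1])
  have hGbr : Gbr y =ᶠ[nhds x] Gclosed y :=
    Filter.eventuallyEq_of_mem (isOpen_Ioo.mem_nhds hx) fun _ hz ↦ Gbr_eq_Gclosed hy hz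
  rw [hGbr.deriv_eq]
  exact (hasDerivAt_Gclosed (hy.1.trans hyY).ne' (sub_ne_zero.2 hY1.ne')
    (sub_ne_zero.2 hs.ne')).deriv

/-- The limit of `∂Ğ/∂x` as `x → 1⁻` equals
`log 2 ((1-y)(1 + (1/2) log(y/(1-y))) - h₂(y)/2)`, which is strictly negative for
`y ∈ (0,1/2)`. -/
theorem Gbr_deriv_limit_at_one (y : ℝ) (hy0 : 0 < y) (hy : y < 1 / 2) :
    Filter.Tendsto (fun x => deriv (Gbr y) x) (nhdsWithin 1 (Set.Iio 1))
      (nhds (Real.log 2 * ((1 - y) * (1 + 1 / 2 * Real.log (y / (1 - y))) - binEnt y / 2))) ∧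
    Real.log 2 * ((1 - y) * (1 + 1 / 2 * Real.log (y / (1 - y))) - binEnt y / 2) < 0 := by
  have hy1 : 1 - y ≠ 0 := by linarith
  refine ⟨?_, log_two_mul_sub_half_binEnt_neg hy0 hy⟩
  rw [← GclosedDeriv_one hy0.ne' hy1]
  refine ((continuousAt_GclosedDeriv_one hy0.ne' hy1).tendsto.mono_left
    nhdsWithin_le_nhds).congr' ?_
  filter_upwards [Ioo_mem_nhdsLT one_pos] with x hx
  exact (deriv_Gbr ⟨hy0, by linarith⟩ hx).symm
end

section
/- With Ğ(y,x) as defined, for any fixed y ∈ (0,1/2) the second derivative of Ğ(y,x) with respect to x satisfies ∂²Ğ/∂x² = -(1-y)·log²(2)·((1-2y)/(2-2y-2^x·(1-2y)) + 2^{-x}·log(1 + (2y-1)·2^x/(2-2y))) < 0 for all x ∈ (0,1); hence x ↦ Ğ(y,x) is strictly concave on (0,1). -/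
/-!
With `t = 2^{-x}`, `k = (1-2y)/(2-2y)` and `r = 1 - k 2^x` one has `y_{(x)} = 2(1-y) t r`, and every
logarithm in `Ğ` splits into `log 2`, `log y`, `log (1-y)` and `log r`. Hence on `(0,1)`
`Ğ(y,x) = (x D(y‖1/2) - log(2-2y))/2 - (1-y) φ_k(x)` with `φ_k(x) = (2^{-x} - k) log r`, and
`φ_k'' = log²2 · (k/r + 2^{-x} log r)`. Since `k/r = 2^{-x} (r⁻¹ - 1)`, this is positive by
`log r > 1 - r⁻¹`, which is the inequality `ε/(1+ε) < log(1+ε)`.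
-/

open Real Set

noncomputable def phi (k x : ℝ) : ℝ := ((2 : ℝ) ^ (-x) - k) * log (1 - k * 2 ^ x)

lemma two_rpow_neg_mul_two_rpow (x : ℝ) : (2 : ℝ) ^ (-x) * 2 ^ x = 1 := by
  rw [rpow_neg zero_le_two, inv_mul_cancel₀ (rpow_pos_of_pos two_pos x).ne']

lemma hasDerivAt_two_rpow_neg (x : ℝ) :
    HasDerivAt (fun x : ℝ => (2 : ℝ) ^ (-x)) (-(2 ^ (-x) * log 2)) x := by
  simpa [Function.comp_def] using
    (hasStrictDerivAt_const_rpow two_pos (-x)).hasDerivAt.comp x (hasDerivAt_neg x)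

lemma hasDerivAt_log_one_sub_mul_two_rpow {k x : ℝ} (hr : 1 - k * 2 ^ x ≠ 0) :
    HasDerivAt (fun x : ℝ => log (1 - k * 2 ^ x)) (-(k * 2 ^ x * log 2) / (1 - k * 2 ^ x)) x :=
  (((hasStrictDerivAt_const_rpow two_pos x).hasDerivAt.const_mul k).const_sub 1).log hr
    |>.congr_deriv (by ring)

lemma hasDerivAt_phi {k x : ℝ} (hr : 1 - k * 2 ^ x ≠ 0) :
    HasDerivAt (phi k) (-log 2 * (2 ^ (-x) * log (1 - k * 2 ^ x) + k)) x := by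
  refine ((hasDerivAt_two_rpow_neg x).sub_const k).fun_mul
    (hasDerivAt_log_one_sub_mul_two_rpow hr) |>.congr_deriv ?_
  field_simp
  linear_combination (-k) * two_rpow_neg_mul_two_rpow x

lemma hasDerivAt_two_rpow_neg_mul_log {k x : ℝ} (hr : 1 - k * 2 ^ x ≠ 0) :
    HasDerivAt (fun x : ℝ => (2 : ℝ) ^ (-x) * log (1 - k * 2 ^ x))
      (-log 2 * (2 ^ (-x) * log (1 - k * 2 ^ x) + k / (1 - k * 2 ^ x))) x := by
  refine (hasDerivAt_two_rpow_neg x).fun_mul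
    (hasDerivAt_log_one_sub_mul_two_rpow hr) |>.congr_deriv ?_
  field_simp
  linear_combination (-k) * two_rpow_neg_mul_two_rpow x

lemma div_add_two_rpow_neg_mul_log_pos {k x : ℝ} (hk : k ≠ 0) (hr : 0 < 1 - k * 2 ^ x) :
    0 < k / (1 - k * 2 ^ x) + 2 ^ (-x) * log (1 - k * 2 ^ x) := by
  have hr1 : (1 - k * 2 ^ x)⁻¹ ≠ 1 := by
    rw [Ne, inv_eq_one, sub_eq_self]
    exact mul_ne_zero hk (rpow_pos_of_pos two_pos x).ne'
  have hlog : 1 - (1 - k * 2 ^ x)⁻¹ < log (1 - k * 2 ^ x) := by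
    have := log_lt_sub_one_of_pos (inv_pos.2 hr) hr1
    rw [log_inv] at this
    linarith
  have hdiv : k / (1 - k * 2 ^ x) = 2 ^ (-x) * ((1 - k * 2 ^ x)⁻¹ - 1) := by
    field_simp
    linear_combination (-k) * two_rpow_neg_mul_two_rpow x
  rw [hdiv, ← mul_add]
  exact mul_pos (rpow_pos_of_pos two_pos _) (by linarith)

lemma one_sub_mul_two_rpow_pos {y x : ℝ} (hy0 : 0 < y) (hy1 : y < 1) (hx : x < 1) :
    0 < 1 - (1 - 2 * y) / (2 - 2 * y) * 2 ^ x := by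
  have hu0 : (0 : ℝ) < 2 ^ x := rpow_pos_of_pos two_pos x
  have hu2 : (2 : ℝ) ^ x < 2 := by simpa using rpow_lt_rpow_of_exponent_lt one_lt_two hx
  rw [div_mul_eq_mul_div, sub_pos, div_lt_one (by linarith)]
  nlinarith

lemma div_div_one_sub_div_mul (a u : ℝ) {b : ℝ} (hb : b ≠ 0) :
    a / b / (1 - a / b * u) = a / (b - u * a) := by
  rw [div_mul_eq_mul_div, one_sub_div hb, div_div_div_cancel_right₀ hb, mul_comm]

lemma klBer_half {y : ℝ} (hy0 : y ≠ 0) (hy1 : 1 - y ≠ 0) :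
    klBer y (1 / 2) = log 2 + y * log y + (1 - y) * log (1 - y) := by
  rw [klBer, show y / (1 / 2) = 2 * y by ring, show (1 - y) / (1 - 1 / 2) = 2 * (1 - y) by ring,
    log_mul two_ne_zero hy0, log_mul two_ne_zero hy1]
  ring

lemma yOf_eq {y : ℝ} (hy1 : y < 1) (x : ℝ) :
    yOf y x = 2 * (1 - y) * 2 ^ (-x) * (1 - (1 - 2 * y) / (2 - 2 * y) * 2 ^ x) := by
  have hy1' : 1 - y ≠ 0 := by linarith
  rw [yOf, sub_eq_add_neg (1 : ℝ) x, rpow_add two_pos, rpow_one]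
  field_simp
  linear_combination (1 - 2 * y) * two_rpow_neg_mul_two_rpow x

lemma Gbr_eq_sub_phi {y x : ℝ} (hy0 : 0 < y) (hy1 : y < 1) (hx : x ∈ Ioo 0 1) :
    Gbr y x = (x * klBer y (1 / 2) - log (2 * (1 - y))) / 2
      - (1 - y) * phi ((1 - 2 * y) / (2 - 2 * y)) x := by
  have hr := one_sub_mul_two_rpow_pos hy0 hy1 hx.2
  have hp := yOf_eq hy1 x
  set k := (1 - 2 * y) / (2 - 2 * y)
  have hk' : k * (2 - 2 * y) = 1 - 2 * y := div_mul_cancel₀ _ (by linarith)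
  set t := (2 : ℝ) ^ (-x) with ht
  set u := (2 : ℝ) ^ x with hu
  set r := 1 - k * u with hr_def
  have htu : t * u = 1 := two_rpow_neg_mul_two_rpow x
  have ht0 : 0 < t := rpow_pos_of_pos two_pos _
  have ht1 : t < 1 := rpow_lt_one_of_one_lt_of_neg one_lt_two (by linarith [hx.1])
  have hu0 : u ≠ 0 := (rpow_pos_of_pos two_pos _).ne'
  have hu2 : u < 2 := by simpa using rpow_lt_rpow_of_exponent_lt one_lt_two hx.2
  have h2x : (2 : ℝ) ^ (-(1 - x)) = u / 2 := by rw [neg_sub, rpow_sub two_pos, rpow_one]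
  clear_value k t u r
  have hy1' : 1 - y ≠ 0 := by linarith
  have hrel : 2 * (1 - y) * t * r = 2 * (1 - y) * t - (1 - 2 * y) := by
    rw [hr_def]; linear_combination (-(2 * (1 - y) * k)) * htu - hk'
  have hp0 : yOf y x ≠ 0 := by rw [hp]; positivity
  have harg₁ : y / yOf y x / (u / 2) = y / (1 - y) * r⁻¹ := by
    rw [hp]; field_simp; linear_combination (-1) * htu
  have harg₂ : (1 - y / yOf y x) / (1 - u / 2) = r⁻¹ := by
    rw [hp]; field_simp [(by linarith : 2 - u ≠ 0)]; linear_combination (1 - y) * htu + hrel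
  have harg₃ : yOf y x / t = 2 * (1 - y) * r := by rw [hp]; field_simp
  have harg₄ : (1 - yOf y x) / (1 - t) = 2 * (1 - y) := by
    rw [hp, div_eq_iff (by linarith)]; linear_combination (-1) * hrel
  rw [Gbr, Gfun, phi, klBer.eq_1 (y / yOf y x), klBer.eq_1 (yOf y x), ← ht, ← hu, h2x,
    harg₁, harg₂, harg₃, harg₄, log_mul (by positivity) (inv_ne_zero hr.ne'),
    log_div hy0.ne' hy1', log_inv, ← hr_def, log_mul (by positivity) hr.ne']
  generalize yOf y x = p at hp hp0 ⊢
  field_simp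
  linear_combination (-2) * klBer_half hy0.ne' hy1' + 2 * log_mul two_ne_zero hy1' - log r * hp
    - 2 * (1 - y) * log r * t * hr_def + 2 * (1 - y) * log r * k * htu

lemma hasDerivAt_Gbr {y x : ℝ} (hy0 : 0 < y) (hy1 : y < 1) (hx : x ∈ Ioo 0 1) :
    HasDerivAt (Gbr y) (klBer y (1 / 2) / 2 + (1 - y) * log 2 *
      (2 ^ (-x) * log (1 - (1 - 2 * y) / (2 - 2 * y) * 2 ^ x) + (1 - 2 * y) / (2 - 2 * y))) x := by
  have hr := one_sub_mul_two_rpow_pos hy0 hy1 hx.2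
  have hclosed := (((hasDerivAt_id x).mul_const (klBer y (1 / 2))).sub_const
    (log (2 * (1 - y)))).div_const 2 |>.sub ((hasDerivAt_phi hr.ne').const_mul (1 - y))
  refine hclosed.congr_of_eventuallyEq ?_ |>.congr_deriv (by ring)
  filter_upwards [isOpen_Ioo.mem_nhds hx] with z hz using Gbr_eq_sub_phi hy0 hy1 hz

lemma deriv_deriv_Gbr {y x : ℝ} (hy0 : 0 < y) (hy1 : y < 1) (hx : x ∈ Ioo 0 1) :
    deriv (deriv (Gbr y)) x = -(1 - y) * log 2 ^ 2 *
      ((1 - 2 * y) / (2 - 2 * y) / (1 - (1 - 2 * y) / (2 - 2 * y) * 2 ^ x)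
        + 2 ^ (-x) * log (1 - (1 - 2 * y) / (2 - 2 * y) * 2 ^ x)) := by
  have hr := one_sub_mul_two_rpow_pos hy0 hy1 hx.2
  have hderiv : deriv (Gbr y) =ᶠ[nhds x] fun z => klBer y (1 / 2) / 2 + (1 - y) * log 2 *
      (2 ^ (-z) * log (1 - (1 - 2 * y) / (2 - 2 * y) * 2 ^ z) + (1 - 2 * y) / (2 - 2 * y)) := by
    filter_upwards [isOpen_Ioo.mem_nhds hx] with z hz using (hasDerivAt_Gbr hy0 hy1 hz).deriv
  rw [hderiv.deriv_eq]
  exact ((((hasDerivAt_two_rpow_neg_mul_log hr.ne').add_const _).const_mul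
    ((1 - y) * log 2)).const_add _ |>.congr_deriv (by ring)).deriv

/-- The second derivative of `Ğ(y,·)` is given by the stated formula and is negative on
`(0,1)`; hence `x ↦ Ğ(y,x)` is strictly concave on `(0,1)`. -/
theorem Gbr_strictly_concave (y : ℝ) (hy0 : 0 < y) (hy : y < 1 / 2) :
    (∀ x ∈ Set.Ioo (0 : ℝ) 1,
      deriv (deriv (Gbr y)) x
        = -(1 - y) * (Real.log 2) ^ 2 *
            ((1 - 2 * y) / (2 - 2 * y - (2 : ℝ) ^ x * (1 - 2 * y))
              + (2 : ℝ) ^ (-x) * Real.log (1 + (2 * y - 1) * (2 : ℝ) ^ x / (2 - 2 * y))) ∧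
      deriv (deriv (Gbr y)) x < 0) ∧
    StrictConcaveOn ℝ (Set.Ioo (0 : ℝ) 1) (Gbr y) := by
  have hy1 : y < 1 := by linarith
  have hk : (1 - 2 * y) / (2 - 2 * y) ≠ 0 := div_ne_zero (by linarith) (by linarith)
  have hneg : ∀ x ∈ Ioo (0 : ℝ) 1, deriv (deriv (Gbr y)) x < 0 := fun x hx => by
    rw [deriv_deriv_Gbr hy0 hy1 hx]
    exact mul_neg_of_neg_of_pos (by nlinarith [log_pos one_lt_two])
      (div_add_two_rpow_neg_mul_log_pos hk (one_sub_mul_two_rpow_pos hy0 hy1 hx.2))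
  refine ⟨fun x hx => ⟨?_, hneg x hx⟩, strictConcaveOn_of_deriv2_neg' (convex_Ioo 0 1)
    (fun x hx => (hasDerivAt_Gbr hy0 hy1 hx).continuousAt.continuousWithinAt) hneg⟩
  rw [deriv_deriv_Gbr hy0 hy1 hx, div_div_one_sub_div_mul _ _ (by linarith),
    show 1 - (1 - 2 * y) / (2 - 2 * y) * 2 ^ x = 1 + (2 * y - 1) * 2 ^ x / (2 - 2 * y) by ring]
end

section
/- Consider the function f(y) = log(2)·((1-y)·(1-log(2-2y)) - h₂(y)/2) on [0,1/2] (the limiting derivative Ğ'_y(0)). Then f(1/2) = 0, f(0) = log(2)·(1-log 2) > 0, f'(y) = log(2)·log(2(1-y)) - (1/2)·log((1-y)/y) satisfies f'(1/2) = 0 and f'(y) → -∞ as y → 0⁺, and f''(y) = (1/(1-y))·(1/(2y) - log 2) > 0 for y ∈ (0,1/2); consequently f(y) > 0 for all y ∈ (0,1/2). -/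
/-- The limiting derivative `Ğ'_y(0)` as a function of `y`. -/
noncomputable def fDer0 (y : ℝ) : ℝ :=
  Real.log 2 * ((1 - y) * (1 - Real.log (2 - 2 * y)) - binEnt y / 2)

open Real Set Filter Topology

theorem StrictConvexOn.lt_of_deriv_eq_zero {S : Set ℝ} {f : ℝ → ℝ} {x y : ℝ}
    (hf : StrictConvexOn ℝ S f) (hx : x ∈ S) (hy : y ∈ S) (hxy : x < y)
    (hfy : DifferentiableAt ℝ f y) (hf'y : deriv f y = 0) : f y < f x := by
  have hslope : slope f x y < 0 := hf'y ▸ hf.slope_lt_deriv hx hy hxy hfy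
  rw [slope_def_field, div_lt_iff₀ (sub_pos.2 hxy), zero_mul] at hslope
  linarith

theorem binEnt_eq_binEntropy_div_log_two (x : ℝ) : binEnt x = binEntropy x / log 2 := by
  simp only [binEnt, binEntropy, logb, log_inv]
  ring

theorem fDer0_eq (y : ℝ) :
    fDer0 y = log 2 * ((1 - y) * (1 - log (2 * (1 - y)))) - binEntropy y / 2 := by
  have hlog2 : log 2 ≠ 0 := (log_pos one_lt_two).ne'
  rw [fDer0, binEnt_eq_binEntropy_div_log_two, show 2 - 2 * y = 2 * (1 - y) by ring]
  field_simp

theorem fDer0_half : fDer0 (1 / 2) = 0 := by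
  rw [fDer0_eq, one_div, binEntropy_two_inv]
  norm_num
  ring

theorem fDer0_zero : fDer0 0 = log 2 * (1 - log 2) := by
  simp [fDer0_eq]

theorem hasDerivAt_one_sub_mul_one_sub_log {y : ℝ} (hy : y < 1) :
    HasDerivAt (fun y => (1 - y) * (1 - log (2 * (1 - y)))) (log (2 * (1 - y))) y := by
  have hu : HasDerivAt (fun y : ℝ => 1 - y) (-1) y := by
    simpa using (hasDerivAt_id y).const_sub 1
  have hy' : 1 - y ≠ 0 := by linarith
  have hlog := (hu.const_mul 2).log (mul_ne_zero two_ne_zero hy')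
  refine (hu.mul (hlog.const_sub 1)).congr_deriv ?_
  field_simp
  ring

noncomputable def fDer0Deriv (y : ℝ) : ℝ :=
  log 2 * log (2 * (1 - y)) - 1 / 2 * log ((1 - y) / y)

theorem hasDerivAt_fDer0 {y : ℝ} (h0 : 0 < y) (h1 : y < 1) :
    HasDerivAt fDer0 (fDer0Deriv y) y := by
  have h := ((hasDerivAt_one_sub_mul_one_sub_log h1).const_mul (log 2)).sub
    ((hasDerivAt_binEntropy h0.ne' h1.ne).div_const 2)
  rw [show fDer0 = _ from funext fDer0_eq]
  refine h.congr_deriv ?_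
  rw [fDer0Deriv, log_div (by linarith) h0.ne']
  ring

theorem hasDerivAt_fDer0Deriv {y : ℝ} (h0 : 0 < y) (h1 : y < 1) :
    HasDerivAt fDer0Deriv (1 / (1 - y) * (1 / (2 * y) - log 2)) y := by
  have hu : HasDerivAt (fun y : ℝ => 1 - y) (-1) y := by
    simpa using (hasDerivAt_id y).const_sub 1
  have hy' : 1 - y ≠ 0 := by linarith
  have hlog₁ := (hu.const_mul 2).log (mul_ne_zero two_ne_zero hy')
  have hlog₂ := (hu.div (hasDerivAt_id' y) h0.ne').log (div_ne_zero hy' h0.ne')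
  refine ((hlog₁.const_mul (log 2)).sub (hlog₂.const_mul (1 / 2))).congr_deriv ?_
  simp only [Pi.div_apply]
  field_simp
  ring

theorem deriv_fDer0 {y : ℝ} (h0 : 0 < y) (h1 : y < 1) : deriv fDer0 y = fDer0Deriv y :=
  (hasDerivAt_fDer0 h0 h1).deriv

theorem deriv_fDer0_half : deriv fDer0 (1 / 2) = 0 := by
  rw [deriv_fDer0 (by norm_num) (by norm_num)]
  norm_num [fDer0Deriv]

theorem deriv_fDer0_eventuallyEq {y : ℝ} (h0 : 0 < y) (h1 : y < 1) :
    deriv fDer0 =ᶠ[𝓝 y] fDer0Deriv := by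
  filter_upwards [Ioo_mem_nhds h0 h1] with z hz
  exact deriv_fDer0 hz.1 hz.2

theorem deriv_deriv_fDer0 {y : ℝ} (h0 : 0 < y) (h1 : y < 1) :
    deriv (deriv fDer0) y = 1 / (1 - y) * (1 / (2 * y) - log 2) := by
  rw [(deriv_fDer0_eventuallyEq h0 h1).deriv_eq, (hasDerivAt_fDer0Deriv h0 h1).deriv]

theorem deriv_deriv_fDer0_pos {y : ℝ} (h0 : 0 < y) (h1 : y < 1 / 2) :
    0 < deriv (deriv fDer0) y := by
  rw [deriv_deriv_fDer0 h0 (by linarith)]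
  have h2y : 1 < 1 / (2 * y) := by rw [lt_div_iff₀ (by linarith)]; linarith
  have hlog2 : log 2 < 1 := log_two_lt_d9.trans (by norm_num)
  exact mul_pos (one_div_pos.2 (by linarith)) (by linarith)

theorem tendsto_fDer0Deriv_nhdsGT_zero : Tendsto fDer0Deriv (𝓝[>] 0) atBot := by
  have hratio : Tendsto (fun y : ℝ => (1 - y) / y) (𝓝[>] 0) atTop := by
    refine (tendsto_atTop_add_const_right _ (-1) tendsto_inv_nhdsGT_zero).congr' ?_
    filter_upwards [self_mem_nhdsWithin] with y (hy : 0 < y)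
    field_simp
    ring
  have hfirst : Tendsto (fun y : ℝ => log 2 * log (2 * (1 - y))) (𝓝[>] 0)
      (𝓝 (log 2 * log (2 * (1 - 0)))) :=
    (ContinuousAt.tendsto (by fun_prop (disch := norm_num))).mono_left nhdsWithin_le_nhds
  have hsecond := tendsto_neg_atTop_atBot.comp
    ((tendsto_log_atTop.comp hratio).const_mul_atTop (one_half_pos (α := ℝ)))
  refine (hfirst.add_atBot hsecond).congr fun y => ?_
  simp only [fDer0Deriv, Function.comp_apply, sub_eq_add_neg]

theorem tendsto_deriv_fDer0_nhdsGT_zero : Tendsto (deriv fDer0) (𝓝[>] 0) atBot := by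
  refine tendsto_fDer0Deriv_nhdsGT_zero.congr' ?_
  filter_upwards [Ioo_mem_nhdsGT one_pos] with y hy
  exact (deriv_fDer0 hy.1 hy.2).symm

theorem strictConvexOn_fDer0 : StrictConvexOn ℝ (Ioc 0 (1 / 2)) fDer0 := by
  refine strictConvexOn_of_deriv2_pos (convex_Ioc _ _) (fun y hy => ?_) (fun y hy => ?_)
  · exact (hasDerivAt_fDer0 hy.1 (by linarith [hy.2])).continuousAt.continuousWithinAt
  · rw [interior_Ioc] at hy
    exact deriv_deriv_fDer0_pos hy.1 hy.2

/-- Properties of `f(y) = log 2 ((1-y)(1 - log(2-2y)) - h₂(y)/2)`: it vanishes at `1/2`,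
is positive at `0`, has the stated first and second derivatives, and is positive on
`(0,1/2)`. -/
theorem fDer0_properties :
    fDer0 (1 / 2) = 0 ∧
    fDer0 0 = Real.log 2 * (1 - Real.log 2) ∧
    0 < Real.log 2 * (1 - Real.log 2) ∧
    (∀ y ∈ Set.Ioo (0 : ℝ) (1 / 2),
      deriv fDer0 y = Real.log 2 * Real.log (2 * (1 - y)) - 1 / 2 * Real.log ((1 - y) / y)) ∧
    deriv fDer0 (1 / 2) = 0 ∧
    Filter.Tendsto (fun y => deriv fDer0 y) (nhdsWithin 0 (Set.Ioi 0)) Filter.atBot ∧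
    (∀ y ∈ Set.Ioo (0 : ℝ) (1 / 2),
      deriv (deriv fDer0) y = 1 / (1 - y) * (1 / (2 * y) - Real.log 2) ∧
      0 < deriv (deriv fDer0) y) ∧
    (∀ y ∈ Set.Ioo (0 : ℝ) (1 / 2), 0 < fDer0 y) := by
  refine ⟨fDer0_half, fDer0_zero, ?_, fun y hy => deriv_fDer0 hy.1 (by linarith [hy.2]),
    deriv_fDer0_half, tendsto_deriv_fDer0_nhdsGT_zero, fun y hy =>
      ⟨deriv_deriv_fDer0 hy.1 (by linarith [hy.2]), deriv_deriv_fDer0_pos hy.1 hy.2⟩,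
    fun y hy => ?_⟩
  · exact mul_pos (log_pos one_lt_two) (by linarith [log_two_lt_d9])
  · have hmin := strictConvexOn_fDer0.lt_of_deriv_eq_zero ⟨hy.1, hy.2.le⟩ ⟨by norm_num, le_rfl⟩
      hy.2 (hasDerivAt_fDer0 (by norm_num) (by norm_num)).differentiableAt deriv_fDer0_half
    rwa [fDer0_half] at hmin
end
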